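/- (Closedness of the set of 1-vanishing polynomials with bounded linear coefficients.) Let r ≥ 2 and m ≥ 2 be integers and K > 0. For each i ∈ {1,…,m}, let σ̂^i_K(r,1,m) denote the set of all P ∈ 𝒫(r,m) for which there exists a ∈ ℝ^{m−1} with all entries of absolute value at most K such that P satisfies the 1-vanishing condition on the 1-truncation parametrized by the i-th coordinate with linear coefficients a. Then each set σ̂^i_K(r,1,m), as well as the union ⋃_{i=1}^m σ̂^i_K(r,1,m), is a closed subset of 𝒫(r,m); in particular these sets coincide with their closures in 𝒫(r,m). -/

import Mathlib

open MvPolynomial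

noncomputable section

/-- `𝒫(r,n)`: polynomials in `n` real variables with zero constant term and
total degree at most `r`. -/
def PolySpace (r n : ℕ) : Set (MvPolynomial (Fin n) ℝ) :=
  {P | P.coeff 0 = 0 ∧ P.totalDegree ≤ r}

/-- Sup-norm of the coefficients of a polynomial. -/
def polyNorm {n : ℕ} (P : MvPolynomial (Fin n) ℝ) : ℝ :=
  ⨆ μ : Fin n →₀ ℕ, |P.coeff μ|

/-- The `s`-truncation parametrized by the `i`-th coordinate with coefficients `a`:
the curve whose `i`-th component is `t` and whose `j`-th component (`j ≠ i`) is
`∑_{k=1}^{s} a_{jk} t^k`. -/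
def truncCurve {m : ℕ} (s : ℕ) (i : Fin m) (a : Fin m → Fin s → ℝ) : ℝ → Fin m → ℝ :=
  fun t j => if j = i then t else ∑ k : Fin s, a j k * t ^ ((k : ℕ) + 1)

/-- `P` satisfies the `s`-vanishing condition on the curve `γ`. -/
def SVanishing {m : ℕ} (s : ℕ) (P : MvPolynomial (Fin m) ℝ) (γ : ℝ → Fin m → ℝ) : Prop :=
  ∀ ℓ : Fin m, ∀ α ≤ s, iteratedDeriv α (fun t => eval (γ t) (pderiv ℓ P)) 0 = 0

/-- Closure with respect to the coefficient sup-norm. -/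
def closureNorm {n : ℕ} (A : Set (MvPolynomial (Fin n) ℝ)) : Set (MvPolynomial (Fin n) ℝ) :=
  {P | ∀ ε > (0:ℝ), ∃ Q ∈ A, polyNorm (P - Q) < ε}

/-- `σ^i(r,s,m)`: polynomials of `𝒫(r,m)` that satisfy the `s`-vanishing condition on
some `s`-truncation parametrized by the `i`-th coordinate. -/
def sigmaI (r s m : ℕ) (i : Fin m) : Set (MvPolynomial (Fin m) ℝ) :=
  {P | P ∈ PolySpace r m ∧ ∃ a : Fin m → Fin s → ℝ, SVanishing s P (truncCurve s i a)}

/-- `σ̂^i_K(r,1,m)`: polynomials of `𝒫(r,m)` satisfying the `1`-vanishing condition on a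
`1`-truncation parametrized by the `i`-th coordinate whose linear coefficients are
bounded by `K` in absolute value. -/
def sigmaHatIK (r m : ℕ) (K : ℝ) (i : Fin m) : Set (MvPolynomial (Fin m) ℝ) :=
  {P | P ∈ PolySpace r m ∧ ∃ a : Fin m → Fin 1 → ℝ,
    (∀ j : Fin m, |a j 0| ≤ K) ∧ SVanishing 1 P (truncCurve 1 i a)}

/-!
On the `1`-truncation `γ(t) = t • v` (with `v i = 1`), the `1`-vanishing condition says that
`∇P(0) = 0` and that the Hessian of `P` at `0` kills `v`; both are continuous in the coefficients
of `P` and in `v`. A norm limit of members of `σ̂^i_K` is a coefficientwise limit, and since the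
admissible `v` range over a compact box, a subsequence of their directions converges to an
admissible direction for the limit. A finite union of closed sets is closed.
-/

open Filter Topology

section PolyNorm

variable {n : ℕ}

lemma abs_coeff_le_polyNorm (P : MvPolynomial (Fin n) ℝ) (μ : Fin n →₀ ℕ) :
    |P.coeff μ| ≤ polyNorm P := by
  refine le_ciSup (f := fun μ => |P.coeff μ|) ?_ μ
  refine ((P.support.image fun μ => |P.coeff μ|).finite_toSet.insert 0).bddAbove.mono ?_
  rintro _ ⟨ν, rfl⟩
  by_cases hν : ν ∈ P.support
  · exact Or.inr (Finset.mem_image_of_mem _ hν)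
  · simp [notMem_support_iff.1 hν]

lemma polyNorm_zero : polyNorm (0 : MvPolynomial (Fin n) ℝ) = 0 := by
  simp [polyNorm]

lemma subset_closureNorm (A : Set (MvPolynomial (Fin n) ℝ)) : A ⊆ closureNorm A :=
  fun P hP _ hε => ⟨P, hP, by rwa [sub_self, polyNorm_zero]⟩

lemma closureNorm_mono {A B : Set (MvPolynomial (Fin n) ℝ)} (h : A ⊆ B) :
    closureNorm A ⊆ closureNorm B := fun _ hP ε hε =>
  let ⟨Q, hQ, hPQ⟩ := hP ε hε
  ⟨Q, h hQ, hPQ⟩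

lemma closureNorm_iUnion {ι : Type*} [Finite ι] (A : ι → Set (MvPolynomial (Fin n) ℝ)) :
    closureNorm (⋃ i, A i) = ⋃ i, closureNorm (A i) := by
  refine subset_antisymm (fun P hP => ?_)
    (Set.iUnion_subset fun i => closureNorm_mono (Set.subset_iUnion A i))
  by_contra hnot
  have hfar : ∀ i, ∃ ε > 0, ∀ Q ∈ A i, ε ≤ polyNorm (P - Q) := fun i => by
    simpa [closureNorm] using fun h => hnot (Set.mem_iUnion.2 ⟨i, h⟩)
  choose ε hε hfar using hfar
  cases isEmpty_or_nonempty ι with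
  | inl _ => simpa using hP 1 one_pos
  | inr _ =>
    obtain ⟨i₀, hi₀⟩ := Finite.exists_min ε
    obtain ⟨Q, hQ, hPQ⟩ := hP (ε i₀) (hε i₀)
    obtain ⟨i, hi⟩ := Set.mem_iUnion.1 hQ
    exact (hPQ.trans_le (hi₀ i)).not_ge (hfar i Q hi)

lemma closureNorm_subset_of_tendsto_coeff {A : Set (MvPolynomial (Fin n) ℝ)}
    (hA : ∀ (Q : ℕ → MvPolynomial (Fin n) ℝ) (P : MvPolynomial (Fin n) ℝ), (∀ k, Q k ∈ A) →
      (∀ μ, Tendsto (fun k => (Q k).coeff μ) atTop (𝓝 (P.coeff μ))) → P ∈ A) :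
    closureNorm A ⊆ A := by
  intro P hP
  choose Q hQA hPQ using fun k : ℕ => hP (1 / (k + 1)) (by positivity)
  refine hA Q P hQA fun μ => ?_
  rw [tendsto_iff_dist_tendsto_zero]
  refine squeeze_zero (fun _ => dist_nonneg) (fun k => ?_) tendsto_one_div_add_atTop_nhds_zero_nat
  calc dist ((Q k).coeff μ) (P.coeff μ) = |(P - Q k).coeff μ| := by
        rw [Real.dist_eq, abs_sub_comm, coeff_sub]
    _ ≤ polyNorm (P - Q k) := abs_coeff_le_polyNorm _ μ
    _ ≤ 1 / (k + 1) := (hPQ k).le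

end PolyNorm

section CoeffLimits

variable {σ R ι : Type*} [CommSemiring R] [TopologicalSpace R] {l : Filter ι}
  {Q : ι → MvPolynomial σ R} {P : MvPolynomial σ R}

lemma tendsto_coeff_pderiv [ContinuousMul R]
    (h : ∀ μ, Tendsto (fun k => (Q k).coeff μ) l (𝓝 (P.coeff μ))) (j : σ) (μ : σ →₀ ℕ) :
    Tendsto (fun k => (pderiv j (Q k)).coeff μ) l (𝓝 ((pderiv j P).coeff μ)) := by
  simp only [coeff_pderiv]
  exact (h _).mul_const _

variable [T2Space R] [l.NeBot]

lemma eq_zero_of_tendsto_of_forall_eq_zero {f : ι → R} {x : R} (hf : Tendsto f l (𝓝 x))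
    (h : ∀ k, f k = 0) : x = 0 :=
  tendsto_nhds_unique hf (tendsto_const_nhds.congr fun k => (h k).symm)

lemma totalDegree_le_of_tendsto_coeff {r : ℕ}
    (h : ∀ μ, Tendsto (fun k => (Q k).coeff μ) l (𝓝 (P.coeff μ)))
    (hQ : ∀ k, (Q k).totalDegree ≤ r) : P.totalDegree ≤ r := by
  refine Finset.sup_le fun μ hμ => ?_
  by_contra! hr
  refine mem_support_iff.1 hμ (eq_zero_of_tendsto_of_forall_eq_zero (h μ) fun k => ?_)
  exact coeff_eq_zero_of_totalDegree_lt ((hQ k).trans_lt hr)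

lemma mem_polySpace_of_tendsto_coeff {r m : ℕ} {Q : ι → MvPolynomial (Fin m) ℝ}
    {P : MvPolynomial (Fin m) ℝ} (h : ∀ μ, Tendsto (fun k => (Q k).coeff μ) l (𝓝 (P.coeff μ)))
    (hQ : ∀ k, Q k ∈ PolySpace r m) : P ∈ PolySpace r m :=
  ⟨eq_zero_of_tendsto_of_forall_eq_zero (h 0) fun k => (hQ k).1,
    totalDegree_le_of_tendsto_coeff h fun k => (hQ k).2⟩

end CoeffLimits

lemma hasDerivAt_eval_smul {σ : Type*} [Fintype σ] (v : σ → ℝ) (R : MvPolynomial σ ℝ) (c : ℝ) :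
    HasDerivAt (fun t : ℝ => eval (t • v) R) (∑ j, v j * eval (c • v) (pderiv j R)) c := by
  classical
  induction R using MvPolynomial.induction_on with
  | C a => simpa using hasDerivAt_const c a
  | add p q hp hq =>
    simp only [map_add, mul_add, Finset.sum_add_distrib]
    exact hp.add hq
  | mul_X p k hp =>
    simp only [map_mul, eval_X, Pi.smul_apply, smul_eq_mul]
    refine (hp.mul ((hasDerivAt_id' c).mul_const (v k))).congr_deriv ?_
    simp only [Derivation.leibniz, pderiv_X, Pi.single_apply, smul_eq_mul,
      apply_ite (eval (c • v)), map_add, map_mul, map_zero, map_one, eval_X, Pi.smul_apply,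
      mul_ite, mul_zero, mul_add, Finset.sum_add_distrib, Finset.sum_ite_eq, Finset.mem_univ,
      if_true, Finset.sum_mul]
    rw [add_comm]
    congr 1
    · ring
    · exact Finset.sum_congr rfl fun _ _ => by ring

lemma sVanishing_one_smul_iff {m : ℕ} (P : MvPolynomial (Fin m) ℝ) (v : Fin m → ℝ) :
    SVanishing 1 P (fun t => t • v) ↔ ∀ ℓ, (pderiv ℓ P).coeff 0 = 0 ∧
      ∑ j, v j * (pderiv j (pderiv ℓ P)).coeff 0 = 0 := by
  have hvalue : ∀ ℓ, iteratedDeriv 0 (fun t : ℝ => eval (t • v) (pderiv ℓ P)) 0 =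
      (pderiv ℓ P).coeff 0 := fun ℓ => by
    simp [constantCoeff_eq]
  have hslope : ∀ ℓ, iteratedDeriv 1 (fun t : ℝ => eval (t • v) (pderiv ℓ P)) 0 =
      ∑ j, v j * (pderiv j (pderiv ℓ P)).coeff 0 := fun ℓ => by
    simp [iteratedDeriv_one, (hasDerivAt_eval_smul v _ 0).deriv, constantCoeff_eq]
  refine ⟨fun h ℓ => ⟨hvalue ℓ ▸ h ℓ 0 zero_le_one, hslope ℓ ▸ h ℓ 1 le_rfl⟩, fun h ℓ α hα => ?_⟩
  interval_cases α
  · exact (hvalue ℓ).trans (h ℓ).1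
  · exact (hslope ℓ).trans (h ℓ).2

lemma sVanishing_one_smul_of_tendsto {ι : Type*} {l : Filter ι} [l.NeBot] {m : ℕ}
    {Q : ι → MvPolynomial (Fin m) ℝ} {P : MvPolynomial (Fin m) ℝ} {v : ι → Fin m → ℝ}
    {w : Fin m → ℝ} (hQ : ∀ μ, Tendsto (fun k => (Q k).coeff μ) l (𝓝 (P.coeff μ)))
    (hv : Tendsto v l (𝓝 w)) (h : ∀ k, SVanishing 1 (Q k) (fun t => t • v k)) :
    SVanishing 1 P (fun t => t • w) := by
  simp only [sVanishing_one_smul_iff] at h ⊢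
  intro ℓ
  refine ⟨eq_zero_of_tendsto_of_forall_eq_zero (tendsto_coeff_pderiv hQ ℓ 0)
    fun k => (h k ℓ).1, eq_zero_of_tendsto_of_forall_eq_zero (l := l) ?_ fun k => (h k ℓ).2⟩
  refine tendsto_finsetSum _ fun j _ => ?_
  exact (((continuous_apply j).tendsto w).comp hv).mul
    (tendsto_coeff_pderiv (tendsto_coeff_pderiv hQ ℓ) j 0)

lemma truncCurve_one_eq_smul {m : ℕ} (i : Fin m) (a : Fin m → Fin 1 → ℝ) :
    truncCurve 1 i a = fun t => t • Function.update (fun j => a j 0) i 1 := by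
  funext t j
  by_cases hj : j = i <;> simp [truncCurve, hj, mul_comm]

lemma closureNorm_sigmaHatIK (r m : ℕ) (K : ℝ) (i : Fin m) :
    closureNorm (sigmaHatIK r m K i) = sigmaHatIK r m K i := by
  refine (closureNorm_subset_of_tendsto_coeff fun Q P hQ hlim => ?_).antisymm
    (subset_closureNorm _)
  choose hQr a ha hvan using hQ
  have hbox : IsCompact {a : Fin m → Fin 1 → ℝ | ∀ j, |a j 0| ≤ K} := by
    convert isCompact_univ_pi fun _ : Fin m => isCompact_univ_pi fun _ : Fin 1 =>
      isCompact_Icc (a := -K) (b := K) using 1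
    ext a
    simp [abs_le, Pi.le_def, Fin.forall_fin_one, forall_and]
  obtain ⟨b, hb, φ, hφ, hab⟩ := hbox.tendsto_subseq ha
  refine ⟨mem_polySpace_of_tendsto_coeff hlim hQr, b, hb, ?_⟩
  simp only [truncCurve_one_eq_smul] at hvan ⊢
  refine sVanishing_one_smul_of_tendsto (fun μ => (hlim μ).comp hφ.tendsto_atTop) ?_
    fun k => hvan (φ k)
  have hupdate : Continuous fun a : Fin m → Fin 1 → ℝ => Function.update (fun j => a j 0) i 1 :=
    (continuous_pi fun j => (continuous_apply 0).comp (continuous_apply j)).update i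
      continuous_const
  exact (hupdate.tendsto b).comp hab

theorem statement10_general (r m : ℕ) (K : ℝ) :
    (∀ i : Fin m, closureNorm (sigmaHatIK r m K i) = sigmaHatIK r m K i) ∧
    closureNorm (⋃ i : Fin m, sigmaHatIK r m K i) = ⋃ i : Fin m, sigmaHatIK r m K i := by
  refine ⟨closureNorm_sigmaHatIK r m K, ?_⟩
  rw [closureNorm_iUnion]
  exact Set.iUnion_congr (closureNorm_sigmaHatIK r m K)

/-- Closedness of the set of `1`-vanishing polynomials with bounded linear coefficients. -/
theorem statement10 (r m : ℕ) (hr : 2 ≤ r) (hm : 2 ≤ m) (K : ℝ) (hK : 0 < K) :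
    (∀ i : Fin m, closureNorm (sigmaHatIK r m K i) = sigmaHatIK r m K i) ∧
    closureNorm (⋃ i : Fin m, sigmaHatIK r m K i) = ⋃ i : Fin m, sigmaHatIK r m K i :=
  statement10_general r m K

end
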